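/- Boundedness of the normalized total variance score τ: let X be a measurable random vector in ℝ^d on a probability space such that almost surely every coordinate satisfies 0 ≤ X_i ≤ 1 and Σ_{i=1}^d X_i = 1 (i.e., X takes values in the probability simplex), let μ = E[X] and Σ its covariance matrix, and assume ‖μ‖₂² = Σ_{i=1}^d μ_i² < 1. Then the normalized total variance τ(X) = (tr Σ)/(1 − ‖μ‖₂²) satisfies 0 ≤ τ(X) ≤ 1. -/

import Mathlib

open MeasureTheory ProbabilityTheory

/-!
By the Bhatia–Davis inequality, a random variable with values in `[0, 1]` and mean `m` has
variance at most `m (1 - m) = m - m²`. Summing over the coordinates of a random vector in the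
probability simplex, whose means add up to `1`, bounds the total variance by `1 - ∑ mᵢ²`.
-/

section Simplex

variable {Ω ι : Type*} [MeasurableSpace Ω] {μ : Measure Ω} [IsProbabilityMeasure μ] [Fintype ι]
  {X : Ω → ι → ℝ}

lemma sum_integral_eq_one_of_sum_eq_one (hint : ∀ i, Integrable (fun ω ↦ X ω i) μ)
    (hsum : ∀ᵐ ω ∂μ, ∑ i, X ω i = 1) :
    ∑ i, μ[fun ω ↦ X ω i] = 1 := by
  rw [← integral_finsetSum _ fun i _ ↦ hint i, integral_congr_ae hsum]
  simp

lemma sum_variance_le_one_sub_sum_sq_integral (hX : ∀ i, AEMeasurable (fun ω ↦ X ω i) μ)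
    (hsimplex : ∀ᵐ ω ∂μ, (∀ i, X ω i ∈ Set.Icc (0 : ℝ) 1) ∧ ∑ i, X ω i = 1) :
    ∑ i, variance (fun ω ↦ X ω i) μ ≤ 1 - ∑ i, μ[fun ω ↦ X ω i] ^ 2 := by
  have hIcc (i : ι) : ∀ᵐ ω ∂μ, X ω i ∈ Set.Icc (0 : ℝ) 1 := hsimplex.mono fun ω h ↦ h.1 i
  have hint (i : ι) : Integrable (fun ω ↦ X ω i) μ :=
    memLp_one_iff_integrable.mp (memLp_of_bounded (hIcc i) (hX i).aestronglyMeasurable 1)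
  have hmean : ∑ i, μ[fun ω ↦ X ω i] = 1 :=
    sum_integral_eq_one_of_sum_eq_one hint (hsimplex.mono fun ω h ↦ h.2)
  calc ∑ i, variance (fun ω ↦ X ω i) μ
      ≤ ∑ i, (1 - μ[fun ω ↦ X ω i]) * (μ[fun ω ↦ X ω i] - 0) :=
        Finset.sum_le_sum fun i _ ↦ variance_le_sub_mul_sub (hIcc i) (hX i)
    _ = ∑ i, μ[fun ω ↦ X ω i] - ∑ i, μ[fun ω ↦ X ω i] ^ 2 := by
        rw [← Finset.sum_sub_distrib]
        exact Finset.sum_congr rfl fun i _ ↦ by ring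
    _ = 1 - ∑ i, μ[fun ω ↦ X ω i] ^ 2 := by rw [hmean]

end Simplex

/-- Boundedness of the normalized total variance score `τ`: if `X` is a random
vector in `ℝ^d` taking values (almost surely) in the probability simplex, with
mean `μ` satisfying `‖μ‖₂² = ∑ i, μ i ^ 2 < 1`, then
`τ(X) = (tr Σ) / (1 − ‖μ‖₂²) = (∑ i, Var(X i)) / (1 − ∑ i, μ i ^ 2)`
satisfies `0 ≤ τ(X) ≤ 1`. -/
theorem tau_mem_Icc
    {Ω : Type*} [MeasureSpace Ω] [IsProbabilityMeasure (ℙ : Measure Ω)]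
    {d : ℕ} (X : Ω → Fin d → ℝ) (hX : Measurable X)
    (hsimplex : ∀ᵐ ω ∂ℙ, (∀ i, X ω i ∈ Set.Icc (0 : ℝ) 1) ∧ ∑ i, X ω i = 1)
    (hμ : ∑ i, (∫ ω, X ω i ∂ℙ) ^ 2 < 1) :
    0 ≤ (∑ i, Var[fun ω => X ω i]) / (1 - ∑ i, (∫ ω, X ω i ∂ℙ) ^ 2) ∧
      (∑ i, Var[fun ω => X ω i]) / (1 - ∑ i, (∫ ω, X ω i ∂ℙ) ^ 2) ≤ 1 := by
  have hden : 0 < 1 - ∑ i, (∫ ω, X ω i ∂ℙ) ^ 2 := sub_pos.mpr hμ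
  have htotal := sum_variance_le_one_sub_sum_sq_integral
    (fun i ↦ ((measurable_pi_apply i).comp hX).aemeasurable) hsimplex
  exact ⟨div_nonneg (Finset.sum_nonneg fun i _ ↦ variance_nonneg _ _) hden.le,
    (div_le_one hden).mpr htotal⟩
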